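/- In the bipartite SEM with covariance Σ as above, the Lasso irrepresentability quantity γ := max_{j ∈ S*^c} |Σ̃_{j,S*} Σ̃_{S*,S*}^{-1} sign(β_{S*})| (with β_{S*} = β_min 1_s, β_min > 0) equals s·β_max/√(1 + sβ_max²), which exceeds √s/2 when β_max ≥ 1 and s ≥ 1; in particular γ > 1 for s ≥ 5, violating the irrepresentable condition. -/
import Mathlib


open Matrix

/-- For the bipartite-SEM covariance (correlation matrix `corr`),
the Lasso irrepresentability quantity
`γ_j = |Σ̃_{j,S*} Σ̃_{S*,S*}⁻¹ sign(β_{S*})|` (with `β_{S*} = β_min 1_s`, so the sign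
vector is `1_s`) equals `s β_max/√(1+sβ_max²)` for every non-support index `j`;
it exceeds `√s/2` whenever `β_max ≥ 1` and `s ≥ 1`, and in particular exceeds `1`
for `s ≥ 5`, violating the irrepresentable condition. -/
theorem stmt_13 (s m : ℕ) (hs : 1 ≤ s) (βmax βmin : ℝ) (hβ : 1 ≤ βmax)
    (hβmin : 0 < βmin) :
    let Sig : Fin s ⊕ Fin m → Fin s ⊕ Fin m → ℝ := fun a b =>
      match a, b with
      | Sum.inl j, Sum.inl j' => if j = j' then 1 else 0
      | Sum.inl _, Sum.inr _ => βmax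
      | Sum.inr _, Sum.inl _ => βmax
      | Sum.inr k, Sum.inr k' => (if k = k' then 1 else 0) + s * βmax ^ 2
    let corr : Fin s ⊕ Fin m → Fin s ⊕ Fin m → ℝ := fun a b =>
      Sig a b / Real.sqrt (Sig a a * Sig b b)
    let γ : Fin m → ℝ := fun j =>
      |(fun k : Fin s => corr (Sum.inr j) (Sum.inl k)) ⬝ᵥ
        ((Matrix.of (fun k k' : Fin s => corr (Sum.inl k) (Sum.inl k')))⁻¹ *ᵥ
          (fun _ : Fin s => (1 : ℝ)))|
    ∀ j : Fin m,
      γ j = s * βmax / Real.sqrt (1 + s * βmax ^ 2) ∧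
      Real.sqrt s / 2 < γ j ∧
      (5 ≤ s → 1 < γ j) := by
  intro Sig corr γ j
  have hβ0 : (0:ℝ) < βmax := lt_of_lt_of_le one_pos hβ
  have hs1 : (1:ℝ) ≤ (s:ℝ) := by exact_mod_cast hs
  have hsβ : (1:ℝ) ≤ (s:ℝ) * βmax ^ 2 := by nlinarith
  have hD0 : (0:ℝ) < 1 + (s:ℝ) * βmax ^ 2 := by linarith
  have hDpos : 0 < Real.sqrt (1 + (s:ℝ) * βmax ^ 2) := Real.sqrt_pos.mpr hD0
  have hId : (Matrix.of (fun k k' : Fin s => corr (Sum.inl k) (Sum.inl k'))) =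
      (1 : Matrix (Fin s) (Fin s) ℝ) := by
    ext k k'
    simp only [corr, Sig, Matrix.of_apply, Matrix.one_apply]
    by_cases h : k = k' <;> simp [h]
  have hγ : γ j = (s:ℝ) * βmax / Real.sqrt (1 + (s:ℝ) * βmax ^ 2) := by
    show |_| = _
    rw [hId, inv_one, Matrix.one_mulVec]
    have hc : ∀ k : Fin s, corr (Sum.inr j) (Sum.inl k)
        = βmax / Real.sqrt (1 + (s:ℝ) * βmax ^ 2) := by
      intro k
      simp only [corr, Sig]
      norm_num
    have : (fun k : Fin s => corr (Sum.inr j) (Sum.inl k)) ⬝ᵥ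
        (fun _ : Fin s => (1 : ℝ)) = (s:ℝ) * (βmax / Real.sqrt (1 + (s:ℝ) * βmax ^ 2)) := by
      simp [dotProduct, hc]
    rw [this, abs_of_pos (by positivity)]
    ring
  refine ⟨hγ, ?_, ?_⟩
  · rw [hγ, lt_div_iff₀ hDpos]
    have hss : Real.sqrt (s:ℝ) ^ 2 = (s:ℝ) := Real.sq_sqrt (by positivity)
    have hDD : Real.sqrt (1 + (s:ℝ) * βmax ^ 2) ^ 2 = 1 + (s:ℝ) * βmax ^ 2 :=
      Real.sq_sqrt (le_of_lt hD0)
    have h1 : (Real.sqrt (s:ℝ) / 2 * Real.sqrt (1 + (s:ℝ) * βmax ^ 2)) ^ 2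
        < ((s:ℝ) * βmax) ^ 2 := by
      rw [mul_pow, div_pow, hss, hDD]; nlinarith
    have h2 : 0 ≤ Real.sqrt (s:ℝ) / 2 * Real.sqrt (1 + (s:ℝ) * βmax ^ 2) := by positivity
    nlinarith [h1, h2, mul_pos (mul_pos (lt_of_lt_of_le one_pos hs1) hβ0) (one_pos : (0:ℝ) < 1)]
  · intro h5
    have h5' : (5:ℝ) ≤ (s:ℝ) := by exact_mod_cast h5
    have h2 : (2:ℝ) < Real.sqrt (s:ℝ) := by
      rw [show (2:ℝ) = Real.sqrt 4 by
        rw [show (4:ℝ) = 2^2 by norm_num, Real.sqrt_sq (by norm_num)]]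
      exact Real.sqrt_lt_sqrt (by norm_num) (by linarith)
    -- reprove the previous inequality
    have hmain : Real.sqrt (s:ℝ) / 2 < γ j := by
      rw [hγ, lt_div_iff₀ hDpos]
      have hss : Real.sqrt (s:ℝ) ^ 2 = (s:ℝ) := Real.sq_sqrt (by positivity)
      have hDD : Real.sqrt (1 + (s:ℝ) * βmax ^ 2) ^ 2 = 1 + (s:ℝ) * βmax ^ 2 :=
        Real.sq_sqrt (le_of_lt hD0)
      have h1 : (Real.sqrt (s:ℝ) / 2 * Real.sqrt (1 + (s:ℝ) * βmax ^ 2)) ^ 2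
          < ((s:ℝ) * βmax) ^ 2 := by
        rw [mul_pow, div_pow, hss, hDD]; nlinarith
      have h2 : 0 ≤ Real.sqrt (s:ℝ) / 2 * Real.sqrt (1 + (s:ℝ) * βmax ^ 2) := by positivity
      nlinarith [mul_pos (lt_of_lt_of_le one_pos hs1) hβ0]
    linarith
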